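/- In logistic or probit regression with any proper prior on β (in particular a multivariate Cauchy prior), if there is no separation in the data, then the posterior mean E(β_j | y) exists for every j = 1,…,p. -/

import Mathlib

open Real MeasureTheory Set

/-- The standard normal cumulative distribution function. -/
noncomputable def stdNormalCDF (t : ℝ) : ℝ :=
  ∫ s in Set.Iic t, (Real.sqrt (2 * π))⁻¹ * Real.exp (-s ^ 2 / 2)

lemma gauss_integrable :
    Integrable (fun s : ℝ => (Real.sqrt (2 * π))⁻¹ * Real.exp (-s ^ 2 / 2)) := by
  have h : Integrable (fun s : ℝ => Real.exp (-(1/2 : ℝ) * s ^ 2)) :=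
    integrable_exp_neg_mul_sq (by norm_num)
  have := h.const_mul (Real.sqrt (2 * π))⁻¹
  convert this using 2 with s
  ring_nf

lemma gauss_total : (∫ s : ℝ, (Real.sqrt (2 * π))⁻¹ * Real.exp (-s ^ 2 / 2)) = 1 := by
  have h : (∫ s : ℝ, Real.exp (-(1/2 : ℝ) * s ^ 2)) = Real.sqrt (π / (1/2)) :=
    integral_gaussian (1/2)
  have h2 : (∫ s : ℝ, (Real.sqrt (2 * π))⁻¹ * Real.exp (-s ^ 2 / 2))
      = (Real.sqrt (2 * π))⁻¹ * ∫ s : ℝ, Real.exp (-(1/2 : ℝ) * s ^ 2) := by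
    rw [← MeasureTheory.integral_const_mul]
    congr 1 with s
    ring_nf
  rw [h2, h]
  have : π / (1/2) = 2 * π := by ring
  rw [this, inv_mul_cancel₀]
  positivity

lemma sqrt_two_pi_ge_two : (2:ℝ) ≤ Real.sqrt (2 * π) := by
  have h4 : (4:ℝ) ≤ 2 * π := by nlinarith [Real.pi_gt_three]
  have : Real.sqrt 4 ≤ Real.sqrt (2 * π) := Real.sqrt_le_sqrt h4
  rwa [show (4:ℝ) = 2 ^ 2 by norm_num, Real.sqrt_sq (by norm_num : (0:ℝ) ≤ 2)] at this

lemma exp_half_le_two : Real.exp (1/2 : ℝ) ≤ 2 := by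
  have h : (1:ℝ)/2 ≤ Real.log 2 := by linarith [Real.log_two_gt_d9]
  calc Real.exp (1/2 : ℝ) ≤ Real.exp (Real.log 2) := Real.exp_le_exp.mpr h
    _ = 2 := Real.exp_log (by norm_num)

lemma gauss_le_exp (s : ℝ) :
    (Real.sqrt (2 * π))⁻¹ * Real.exp (-s ^ 2 / 2) ≤ Real.exp s := by
  have hinv : (Real.sqrt (2 * π))⁻¹ ≤ 2⁻¹ := by
    apply inv_anti₀ (by norm_num) sqrt_two_pi_ge_two
  have hptw : Real.exp (-s ^ 2 / 2) ≤ Real.exp (s + 1/2) :=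
    Real.exp_le_exp.mpr (by nlinarith [sq_nonneg (s+1)])
  calc (Real.sqrt (2 * π))⁻¹ * Real.exp (-s ^ 2 / 2)
      ≤ 2⁻¹ * Real.exp (s + 1/2) := by
        apply mul_le_mul hinv hptw (Real.exp_pos _).le (by norm_num)
    _ = (Real.exp (1/2) / 2) * Real.exp s := by rw [Real.exp_add]; ring
    _ ≤ 1 * Real.exp s := by
        apply mul_le_mul_of_nonneg_right _ (Real.exp_pos s).le
        linarith [exp_half_le_two]
    _ = Real.exp s := one_mul _

lemma gauss_le_exp_neg (s : ℝ) :
    (Real.sqrt (2 * π))⁻¹ * Real.exp (-s ^ 2 / 2) ≤ Real.exp (-s) := by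
  have := gauss_le_exp (-s)
  rwa [neg_sq] at this

lemma stdNormalCDF_nonneg (t : ℝ) : 0 ≤ stdNormalCDF t :=
  setIntegral_nonneg measurableSet_Iic (fun s _ => by positivity)

lemma stdNormalCDF_le_one (t : ℝ) : stdNormalCDF t ≤ 1 := by
  have := setIntegral_le_integral (s := Set.Iic t) gauss_integrable
    (Filter.Eventually.of_forall fun s => by positivity)
  rwa [gauss_total] at this

lemma stdNormalCDF_mono : Monotone stdNormalCDF := by
  intro a b hab
  exact setIntegral_mono_set gauss_integrable.integrableOn
    (Filter.Eventually.of_forall fun s => by positivity)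
    (HasSubset.Subset.eventuallyLE (Set.Iic_subset_Iic.mpr hab))

lemma stdNormalCDF_le_exp (t : ℝ) : stdNormalCDF t ≤ Real.exp t := by
  calc stdNormalCDF t ≤ ∫ s in Set.Iic t, Real.exp s := by
        apply setIntegral_mono_on gauss_integrable.integrableOn
          (integrableOn_exp_Iic t) measurableSet_Iic
        exact fun s _ => gauss_le_exp s
    _ = Real.exp t := integral_exp_Iic t

lemma one_sub_stdNormalCDF_le (t : ℝ) : 1 - stdNormalCDF t ≤ Real.exp (-t) := by
  have hsplit : stdNormalCDF t
      + ∫ s in Set.Ioi t, (Real.sqrt (2 * π))⁻¹ * Real.exp (-s ^ 2 / 2) = 1 := by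
    rw [← gauss_total]
    exact intervalIntegral.integral_Iic_add_Ioi gauss_integrable.integrableOn gauss_integrable.integrableOn
  have hexpInt : IntegrableOn (fun s : ℝ => Real.exp (-s)) (Set.Ioi t) := by
    have := exp_neg_integrableOn_Ioi t (zero_lt_one)
    simpa only [one_mul, neg_mul] using this
  have hIoi : (∫ s in Set.Ioi t, (Real.sqrt (2 * π))⁻¹ * Real.exp (-s ^ 2 / 2))
      ≤ ∫ s in Set.Ioi t, Real.exp (-s) := by
    apply setIntegral_mono_on gauss_integrable.integrableOn hexpInt measurableSet_Ioi
    exact fun s _ => gauss_le_exp_neg s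
  rw [integral_exp_neg_Ioi] at hIoi
  linarith

/-- Key geometric lemma: no separation gives a uniform negative margin. -/
lemma key_margin (n p : ℕ) [Nonempty (Fin n)] [Nonempty (Fin p)]
    (X : Fin n → Fin p → ℝ) (y : Fin n → Bool)
    (hnosep : ∀ α : Fin p → ℝ, α ≠ 0 →
      ∃ i, (y i = true ∧ ∑ k, X i k * α k < 0) ∨ (y i = false ∧ 0 < ∑ k, X i k * α k)) :
    ∃ δ : ℝ, 0 < δ ∧ ∀ β : Fin p → ℝ, β ≠ 0 →
      ∃ i, (if y i then (∑ k, X i k * β k) else -(∑ k, X i k * β k)) ≤ -δ * ‖β‖ := by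
  classical
  set ψ : Fin n → (Fin p → ℝ) → ℝ :=
    fun i α => if y i then (∑ k, X i k * α k) else -(∑ k, X i k * α k) with hψ
  have hψc : ∀ i, Continuous (ψ i) := by
    intro i
    have hsum : Continuous (fun α : Fin p → ℝ => ∑ k, X i k * α k) :=
      continuous_finset_sum _ fun k _ => continuous_const.mul (continuous_apply k)
    by_cases h : y i <;> simp only [hψ, h, if_true, if_false] <;>
      [exact hsum; exact hsum.neg]
  have hne : (Finset.univ : Finset (Fin n)).Nonempty := Finset.univ_nonempty
  set F : (Fin p → ℝ) → ℝ := fun α => Finset.univ.inf' hne (fun i => ψ i α) with hF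
  have hFc : Continuous F :=
    Continuous.finset_inf'_apply hne fun i _ => hψc i
  have hFneg : ∀ α : Fin p → ℝ, ‖α‖ = 1 → F α < 0 := by
    intro α hα
    have hα0 : α ≠ 0 := by
      intro h; rw [h, norm_zero] at hα; norm_num at hα
    obtain ⟨i, hi⟩ := hnosep α hα0
    have hψneg : ψ i α < 0 := by
      rcases hi with ⟨hy, hlt⟩ | ⟨hy, hlt⟩ <;> simp [hψ, hy] <;> linarith
    exact lt_of_le_of_lt (Finset.inf'_le _ (Finset.mem_univ i)) hψneg
  have hcs : IsCompact (Metric.sphere (0 : Fin p → ℝ) 1) := isCompact_sphere 0 1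
  have hmemnorm : ∀ α : Fin p → ℝ, α ∈ Metric.sphere (0 : Fin p → ℝ) 1 ↔ ‖α‖ = 1 := by
    intro α; rw [Metric.mem_sphere, dist_zero_right]
  have hsne : (Metric.sphere (0 : Fin p → ℝ) 1).Nonempty := by
    refine ⟨fun _ => 1, ?_⟩
    rw [hmemnorm]
    rw [pi_norm_const (1:ℝ), norm_one]
  obtain ⟨α₀, hα₀mem, hα₀max⟩ := hcs.exists_isMaxOn hsne hFc.continuousOn
  refine ⟨-F α₀, by simpa using hFneg α₀ ((hmemnorm α₀).mp hα₀mem), ?_⟩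
  intro β hβ
  have hn0 : ‖β‖ ≠ 0 := norm_ne_zero_iff.mpr hβ
  have hnpos : 0 < ‖β‖ := norm_pos_iff.mpr hβ
  set α := ‖β‖⁻¹ • β with hαdef
  have hαS : ‖α‖ = 1 := by
    rw [hαdef, norm_smul, norm_inv, norm_norm, inv_mul_cancel₀ hn0]
  have hFα : F α ≤ F α₀ := hα₀max ((hmemnorm α).mpr hαS)
  obtain ⟨i, -, hieq⟩ := Finset.exists_mem_eq_inf' hne (fun i => ψ i α)
  have hψα : ψ i α ≤ F α₀ := hieq ▸ hFα
  have hψsmul : ∀ (c : ℝ) (v : Fin p → ℝ), ψ i (c • v) = c * ψ i v := by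
    intro c v
    have hs : (∑ k, X i k * (c • v) k) = c * ∑ k, X i k * v k := by
      rw [Finset.mul_sum]
      refine Finset.sum_congr rfl fun k _ => ?_
      simp only [Pi.smul_apply, smul_eq_mul]
      ring
    simp only [hψ, hs]
    cases y i <;> simp [mul_neg]
  have hβα : ‖β‖ • α = β := by
    rw [hαdef, smul_smul, mul_inv_cancel₀ hn0, one_smul]
  have hhom : ψ i β = ‖β‖ * ψ i α := by
    have h := hψsmul ‖β‖ α
    rwa [hβα] at h
  refine ⟨i, ?_⟩
  show ψ i β ≤ -(-F α₀) * ‖β‖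
  rw [hhom, neg_neg]
  calc ‖β‖ * ψ i α ≤ ‖β‖ * F α₀ := mul_le_mul_of_nonneg_left hψα (norm_nonneg β)
    _ = F α₀ * ‖β‖ := mul_comm _ _

/-- In logistic or probit regression with any proper prior density `w` on `ℝ^p`, if there
is no separation in the data then the posterior mean `E(β_j | y)` exists for every `j`. -/
theorem no_separation_posterior_mean_exists_proper_prior (n p : ℕ)
    (X : Fin n → Fin p → ℝ) (y : Fin n → Bool)
    (f₁ : ℝ → ℝ)
    (hf₁ : f₁ = (fun t => Real.exp t / (1 + Real.exp t)) ∨ f₁ = stdNormalCDF)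
    (w : (Fin p → ℝ) → ℝ) (hw0 : ∀ β, 0 ≤ w β) (hw1 : ∫ β, w β = 1)
    (hnosep : ∀ α : Fin p → ℝ, α ≠ 0 →
      ∃ i, (y i = true ∧ ∑ k, X i k * α k < 0) ∨ (y i = false ∧ 0 < ∑ k, X i k * α k)) :
    ∀ j, Integrable (fun β : Fin p → ℝ =>
      |β j| *
      ((∏ i, if y i then f₁ (∑ k, X i k * β k) else 1 - f₁ (∑ k, X i k * β k)) * w β)) := by
  classical
  intro j
  haveI : Nonempty (Fin p) := ⟨j⟩
  -- the prior is integrable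
  have hwInt : Integrable w := by
    by_contra h
    rw [integral_undef h] at hw1
    norm_num at hw1
  -- basic facts about f₁
  have hf0 : ∀ t, 0 ≤ f₁ t := by
    rcases hf₁ with h | h <;> subst h
    · intro t; positivity
    · exact stdNormalCDF_nonneg
  have hfle1 : ∀ t, f₁ t ≤ 1 := by
    rcases hf₁ with h | h <;> subst h
    · intro t
      rw [div_le_one (by positivity)]
      linarith [Real.exp_pos t]
    · exact stdNormalCDF_le_one
  have hfexp : ∀ t, f₁ t ≤ Real.exp t := by
    rcases hf₁ with h | h <;> subst h
    · intro t
      exact div_le_self (Real.exp_pos t).le (by linarith [Real.exp_pos t])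
    · exact stdNormalCDF_le_exp
  have hfexp' : ∀ t, 1 - f₁ t ≤ Real.exp (-t) := by
    rcases hf₁ with h | h <;> subst h
    · intro t
      have h1 : (0:ℝ) < 1 + Real.exp t := by positivity
      have h2 : 1 - Real.exp t / (1 + Real.exp t) = 1 / (1 + Real.exp t) := by
        field_simp
        ring
      rw [h2, Real.exp_neg]
      rw [one_div]
      exact inv_anti₀ (Real.exp_pos t) (by linarith)
    · exact one_sub_stdNormalCDF_le
  have hfm : Measurable f₁ := by
    rcases hf₁ with h | h <;> subst h
    · fun_prop
    · exact stdNormalCDF_mono.measurable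
  -- n is nonempty
  have hp0 : (fun _ : Fin p => (1:ℝ)) ≠ 0 := by
    intro h
    have := congrFun h j
    norm_num at this
  obtain ⟨i₀, -⟩ := hnosep _ hp0
  haveI : Nonempty (Fin n) := ⟨i₀⟩
  -- uniform margin
  obtain ⟨δ, hδ, hkey⟩ := key_margin n p X y hnosep
  -- factor facts
  set g : Fin n → (Fin p → ℝ) → ℝ :=
    fun i β => if y i then f₁ (∑ k, X i k * β k) else 1 - f₁ (∑ k, X i k * β k) with hg
  have hg0 : ∀ i β, 0 ≤ g i β := by
    intro i β
    simp only [hg]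
    split
    · exact hf0 _
    · linarith [hfle1 (∑ k, X i k * β k)]
  have hg1 : ∀ i β, g i β ≤ 1 := by
    intro i β
    simp only [hg]
    split
    · exact hfle1 _
    · linarith [hf0 (∑ k, X i k * β k)]
  set L : (Fin p → ℝ) → ℝ := fun β => ∏ i, g i β with hL
  have hL0 : ∀ β, 0 ≤ L β := fun β => Finset.prod_nonneg fun i _ => hg0 i β
  -- the key uniform bound
  have hbound : ∀ β : Fin p → ℝ, |β j| * L β ≤ δ⁻¹ := by
    intro β
    by_cases hβ : β = 0
    · subst hβ
      simp only [Pi.zero_apply, abs_zero, zero_mul]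
      positivity
    obtain ⟨i, hi⟩ := hkey β hβ
    have hgexp : g i β ≤ Real.exp (-δ * ‖β‖) := by
      simp only [hg]
      rcases Bool.dichotomy (y i) with hy | hy <;> rw [hy] at hi ⊢
      · rw [if_neg Bool.false_ne_true]
        calc 1 - f₁ (∑ k, X i k * β k) ≤ Real.exp (-∑ k, X i k * β k) := hfexp' _
          _ ≤ Real.exp (-δ * ‖β‖) := Real.exp_le_exp.mpr (by simpa using hi)
      · rw [if_pos rfl]
        calc f₁ (∑ k, X i k * β k) ≤ Real.exp (∑ k, X i k * β k) := hfexp _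
          _ ≤ Real.exp (-δ * ‖β‖) := Real.exp_le_exp.mpr (by simpa using hi)
    have hLg : L β ≤ g i β := by
      calc L β = g i β * ∏ i' ∈ Finset.univ.erase i, g i' β :=
            (Finset.mul_prod_erase _ _ (Finset.mem_univ i)).symm
        _ ≤ g i β * 1 := by
            apply mul_le_mul_of_nonneg_left _ (hg0 i β)
            exact Finset.prod_le_one (fun i' _ => hg0 i' β) (fun i' _ => hg1 i' β)
        _ = g i β := mul_one _
    have h1 : |β j| ≤ ‖β‖ := by
      simpa [Real.norm_eq_abs] using norm_le_pi_norm β j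
    have h2 : L β ≤ Real.exp (-(δ * ‖β‖)) := by
      rw [neg_mul] at hgexp
      exact hLg.trans hgexp
    calc |β j| * L β ≤ ‖β‖ * Real.exp (-(δ * ‖β‖)) :=
          mul_le_mul h1 h2 (hL0 β) (norm_nonneg β)
      _ ≤ δ⁻¹ := by
          have h3 : δ * ‖β‖ ≤ Real.exp (δ * ‖β‖) :=
            le_trans (by linarith) (Real.add_one_le_exp (δ * ‖β‖))
          have h4 : 0 < Real.exp (δ * ‖β‖) := Real.exp_pos _
          rw [Real.exp_neg]
          calc ‖β‖ * (Real.exp (δ * ‖β‖))⁻¹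
              ≤ (δ⁻¹ * Real.exp (δ * ‖β‖)) * (Real.exp (δ * ‖β‖))⁻¹ := by
                apply mul_le_mul_of_nonneg_right _ (inv_nonneg.mpr h4.le)
                calc ‖β‖ = δ⁻¹ * (δ * ‖β‖) := by field_simp
                  _ ≤ δ⁻¹ * Real.exp (δ * ‖β‖) :=
                      mul_le_mul_of_nonneg_left h3 (inv_nonneg.mpr hδ.le)
            _ = δ⁻¹ := by
                rw [mul_assoc, mul_inv_cancel₀ h4.ne', mul_one]
  -- measurability
  have hmL : Measurable L := by
    apply Finset.measurable_prod
    intro i _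
    have hsum : Measurable (fun β : Fin p → ℝ => ∑ k, X i k * β k) :=
      Finset.measurable_sum _ fun k _ => (measurable_pi_apply k).const_mul _
    simp only [hg]
    rcases Bool.dichotomy (y i) with hy | hy <;>
      simp only [hy, Bool.false_eq_true, if_true, if_false, ite_true, ite_false]
    · exact measurable_const.sub (hfm.comp hsum)
    · exact hfm.comp hsum
  -- conclude by domination
  apply Integrable.mono' (hwInt.const_mul δ⁻¹)
  · apply AEMeasurable.aestronglyMeasurable
    exact ((measurable_pi_apply j).abs.aemeasurable.mul
      (hmL.aemeasurable.mul hwInt.aemeasurable))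
  · refine Filter.Eventually.of_forall fun β => ?_
    have hnn : 0 ≤ |β j| * (L β * w β) :=
      mul_nonneg (abs_nonneg _) (mul_nonneg (hL0 β) (hw0 β))
    rw [Real.norm_eq_abs, abs_of_nonneg hnn]
    calc |β j| * (L β * w β) = (|β j| * L β) * w β := by ring
      _ ≤ δ⁻¹ * w β := mul_le_mul_of_nonneg_right (hbound β) (hw0 β)
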